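/- Let n ≥ m ≥ 2, m ≥ k ≥ 1, and let A be a nonnegative real m×n matrix. Then ‖A‖_{F_k} ≤ (1/2)(1 + √k)·√(mn)·max_{i,j} a_{ij}. -/

import Mathlib

open Matrix BigOperators

noncomputable def singularValues {α β : Type*} [Fintype α] [Fintype β] [DecidableEq α]
    (A : Matrix α β ℝ) : α → ℝ :=
  fun i => Real.sqrt ((Matrix.isHermitian_mul_conjTranspose_self A).eigenvalues i)

/-- The Ky Fan `k`-norm: the sum of the `k` largest singular values, expressed as the
largest sum of singular values over index sets of size `k`. -/
noncomputable def kyFan {α β : Type*} [Fintype α] [Fintype β] [DecidableEq α]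
    (k : ℕ) (A : Matrix α β ℝ) : ℝ :=
  sSup ((fun s : Finset α => ∑ i ∈ s, singularValues A i) '' {s | s.card = k})

lemma adj_isHermitian {n : ℕ} (G : SimpleGraph (Fin n)) [DecidableRel G.Adj] :
    (G.adjMatrix ℝ).IsHermitian := by
  unfold Matrix.IsHermitian
  rw [Matrix.conjTranspose_eq_transpose_of_trivial]
  exact G.isSymm_adjMatrix

/-!
Let `M = max aᵢⱼ` and let `σ₁` be the largest singular value. Since `0 ≤ aᵢⱼ ≤ M`,
`∑ σᵢ² = ∑ aᵢⱼ² ≤ M ∑ aᵢⱼ`, and evaluating the quadratic form of `AAᵀ` at the all-ones vector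
(Rayleigh) together with Cauchy–Schwarz gives `∑ aᵢⱼ ≤ σ₁ √(mn)`. Hence `∑ σᵢ² ≤ σ₁ N` with
`N = √(mn) M`. Any `k` singular values sum to at most `σ₁` plus `k - 1` others, which by
Cauchy–Schwarz sum to at most `√((k - 1) σ₁ (N - σ₁))`, and
`max_x (x + √((k - 1) x (N - x))) = (1 + √k) N / 2`.
-/

open Finset

theorem Matrix.IsHermitian.dotProduct_mulVec_le {ι : Type*} [Fintype ι] [DecidableEq ι]
    {B : Matrix ι ι ℝ} (hB : B.IsHermitian) {c : ℝ} (hc : ∀ i, hB.eigenvalues i ≤ c)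
    (x : ι → ℝ) : x ⬝ᵥ (B *ᵥ x) ≤ c * (x ⬝ᵥ x) := by
  have hpsd : (c • 1 - B).PosSemidef := by
    have hspec : c • 1 - B = hB.eigenvectorUnitary *
        diagonal (fun i => c - hB.eigenvalues i) * star (hB.eigenvectorUnitary : Matrix ι ι ℝ) := by
      conv_lhs => rw [hB.spectral_theorem]
      rw [← Unitary.conjStarAlgAut_apply (S := ℝ), ← Algebra.algebraMap_eq_smul_one,
        ← AlgHomClass.commutes (Unitary.conjStarAlgAut ℝ _ hB.eigenvectorUnitary) c, ← map_sub,
        algebraMap_eq_diagonal, diagonal_sub]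
      rfl
    rw [hspec]
    exact (posSemidef_diagonal_iff.mpr fun i => sub_nonneg.mpr (hc i)).mul_mul_conjTranspose_same _
  simpa [sub_mulVec, smul_mulVec, dotProduct_sub] using hpsd.dotProduct_mulVec_nonneg x

theorem Matrix.dotProduct_mul_transpose_mulVec {α β R : Type*} [Fintype α] [Fintype β]
    [CommSemiring R] (A : Matrix α β R) (x : α → R) :
    x ⬝ᵥ ((A * Aᵀ) *ᵥ x) = (x ᵥ* A) ⬝ᵥ (x ᵥ* A) := by
  rw [← mulVec_mulVec, dotProduct_mulVec, mulVec_transpose]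

section SingularValues

variable {α β : Type*} [Fintype α] [Fintype β] [DecidableEq α]

theorem singularValues_nonneg (A : Matrix α β ℝ) (i : α) : 0 ≤ singularValues A i :=
  Real.sqrt_nonneg _

theorem singularValues_sq (A : Matrix α β ℝ) (i : α) :
    singularValues A i ^ 2 = (isHermitian_mul_conjTranspose_self A).eigenvalues i :=
  Real.sq_sqrt (eigenvalues_self_mul_conjTranspose_nonneg A i)

theorem sum_singularValues_sq (A : Matrix α β ℝ) :
    ∑ i, singularValues A i ^ 2 = ∑ i, ∑ j, A i j ^ 2 := by
  calc ∑ i, singularValues A i ^ 2 = (A * Aᴴ).trace := by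
        rw [(isHermitian_mul_conjTranspose_self A).trace_eq_sum_eigenvalues]
        simp [singularValues_sq]
    _ = ∑ i, ∑ j, A i j ^ 2 := by simp [trace, mul_apply, sq]

theorem sum_entries_le_iSup_singularValues_mul (A : Matrix α β ℝ) :
    ∑ i, ∑ j, A i j ≤ (⨆ i, singularValues A i) * √(Fintype.card α * Fintype.card β) := by
  set c := ⨆ i, singularValues A i
  have hc : ∀ i, singularValues A i ≤ c := le_ciSup (Finite.bddAbove_range _)
  have hc0 : 0 ≤ c := Real.iSup_nonneg (singularValues_nonneg A)
  have heig : ∀ i, (isHermitian_mul_conjTranspose_self A).eigenvalues i ≤ c ^ 2 := fun i => by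
    rw [← singularValues_sq]
    exact pow_le_pow_left₀ (singularValues_nonneg A i) (hc i) 2
  set v : β → ℝ := 1 ᵥ* A
  have hsum : ∑ i, ∑ j, A i j = ∑ j, v j := by
    simp only [v, vecMul, dotProduct, Pi.one_apply, one_mul]
    exact Finset.sum_comm
  have hsq : (∑ i, ∑ j, A i j) ^ 2 ≤ Fintype.card α * Fintype.card β * c ^ 2 := calc
    (∑ i, ∑ j, A i j) ^ 2 = (∑ j, v j) ^ 2 := by rw [hsum]
    _ ≤ Fintype.card β * (v ⬝ᵥ v) := by
      simpa [dotProduct, sq] using sq_sum_le_card_mul_sum_sq (s := univ) (f := v)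
    _ = Fintype.card β * ((1 : α → ℝ) ⬝ᵥ ((A * Aᴴ) *ᵥ 1)) := by
      rw [conjTranspose_eq_transpose_of_trivial, dotProduct_mul_transpose_mulVec]
    _ ≤ Fintype.card β * (c ^ 2 * ((1 : α → ℝ) ⬝ᵥ 1)) := by
      gcongr
      exact (isHermitian_mul_conjTranspose_self A).dotProduct_mulVec_le heig 1
    _ = Fintype.card α * Fintype.card β * c ^ 2 := by
      simp only [dotProduct, Pi.one_apply, mul_one, sum_const, card_univ, nsmul_eq_mul]
      ring
  calc ∑ i, ∑ j, A i j ≤ |∑ i, ∑ j, A i j| := le_abs_self _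
    _ ≤ √(Fintype.card α * Fintype.card β * c ^ 2) := Real.abs_le_sqrt hsq
    _ = c * √(Fintype.card α * Fintype.card β) := by
      rw [Real.sqrt_mul (by positivity), Real.sqrt_sq hc0, mul_comm]

end SingularValues

theorem add_le_of_sq_le_mul_sub {x y N K : ℝ} (hx : 0 ≤ x) (hxN : x ≤ N) (hK : 1 ≤ K)
    (hy : 0 ≤ y) (h : y ^ 2 ≤ (K ^ 2 - 1) * (x * (N - x))) : x + y ≤ 1 / 2 * (1 + K) * N := by
  have hu : 0 ≤ 1 / 2 * (1 + K) * N - x := by nlinarith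
  -- the slack in `h` is a perfect square
  have hy2 : y ^ 2 ≤ (1 / 2 * (1 + K) * N - x) ^ 2 := calc
    y ^ 2 ≤ (K ^ 2 - 1) * (x * (N - x)) := h
    _ = (1 / 2 * (1 + K) * N - x) ^ 2 - (1 / 2 * (1 + K) * N - K * x) ^ 2 := by ring
    _ ≤ (1 / 2 * (1 + K) * N - x) ^ 2 := sub_le_self _ (sq_nonneg _)
  linarith [(pow_le_pow_iff_left₀ hy hu two_ne_zero).mp hy2]

theorem sum_le_of_sum_sq_le_iSup_mul {ι : Type*} [Fintype ι] {σ : ι → ℝ} (hσ : ∀ i, 0 ≤ σ i)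
    {N : ℝ} (hN : 0 ≤ N) (h : ∑ i, σ i ^ 2 ≤ (⨆ i, σ i) * N) (s : Finset ι) :
    ∑ i ∈ s, σ i ≤ 1 / 2 * (1 + √(#s : ℝ)) * N := by
  classical
  obtain rfl | ⟨j, hj⟩ := s.eq_empty_or_nonempty
  · simpa using hN
  have : Nonempty ι := ⟨j⟩
  obtain ⟨i₀, hi₀⟩ := exists_eq_ciSup_of_finite (f := σ)
  rw [← hi₀] at h
  set x := σ i₀
  have hσx : ∀ i, σ i ≤ x := fun i => hi₀ ▸ le_ciSup (Finite.bddAbove_range σ) i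
  have hx_sq : x ^ 2 + ∑ i ∈ univ.erase i₀, σ i ^ 2 ≤ x * N := by
    rwa [add_sum_erase _ (fun i => σ i ^ 2) (mem_univ i₀)]
  have hxN : x ≤ N := by
    nlinarith [sum_nonneg fun i (_ : i ∈ univ.erase i₀) => sq_nonneg (σ i), hσ i₀]
  -- drop from `s` the index `i₀` if it occurs, an arbitrary index otherwise
  obtain ⟨j', hj', hsub⟩ : ∃ j' ∈ s, s.erase j' ⊆ univ.erase i₀ := by
    by_cases hi₀s : i₀ ∈ s
    · exact ⟨i₀, hi₀s, fun i hi => mem_erase.2 ⟨ne_of_mem_erase hi, mem_univ i⟩⟩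
    · exact ⟨j, hj, fun i hi => mem_erase.2
        ⟨fun e => hi₀s (e ▸ mem_of_mem_erase hi), mem_univ i⟩⟩
  set t := s.erase j'
  have hcard : (#t : ℝ) = √(#s : ℝ) ^ 2 - 1 := by
    rw [Real.sq_sqrt (Nat.cast_nonneg _), card_erase_of_mem hj',
      Nat.cast_sub (card_pos.2 ⟨j, hj⟩)]
    simp
  have hK : 1 ≤ √(#s : ℝ) := Real.one_le_sqrt.2 (by exact_mod_cast card_pos.2 ⟨j, hj⟩)
  have ht : (∑ i ∈ t, σ i) ^ 2 ≤ (√(#s : ℝ) ^ 2 - 1) * (x * (N - x)) := calc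
    (∑ i ∈ t, σ i) ^ 2 ≤ #t * ∑ i ∈ t, σ i ^ 2 := sq_sum_le_card_mul_sum_sq
    _ ≤ #t * ∑ i ∈ univ.erase i₀, σ i ^ 2 := by gcongr
    _ ≤ (√(#s : ℝ) ^ 2 - 1) * (x * (N - x)) := by
      rw [hcard]
      gcongr <;> linarith
  calc ∑ i ∈ s, σ i = σ j' + ∑ i ∈ t, σ i := (add_sum_erase _ _ hj').symm
    _ ≤ x + ∑ i ∈ t, σ i := by gcongr; exact hσx j'
    _ ≤ 1 / 2 * (1 + √(#s : ℝ)) * N :=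
      add_le_of_sq_le_mul_sub (hσ i₀) hxN hK (sum_nonneg fun i _ => hσ i) ht

theorem kyFan_le_of_nonneg_general (m n k : ℕ) (A : Matrix (Fin m) (Fin n) ℝ)
    (hA : ∀ i j, 0 ≤ A i j) :
    kyFan k A ≤ (1 / 2) * (1 + Real.sqrt k) * Real.sqrt (m * n) * ⨆ i, ⨆ j, A i j := by
  set M := ⨆ i, ⨆ j, A i j
  have hAM : ∀ i j, A i j ≤ M := fun i j =>
    (le_ciSup (Finite.bddAbove_range _) j).trans
      (le_ciSup (Finite.bddAbove_range fun i => ⨆ j, A i j) i)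
  have hM : 0 ≤ M := Real.iSup_nonneg fun i => Real.iSup_nonneg (hA i)
  have hN : 0 ≤ √(m * n) * M := by positivity
  have hσ_sq : ∑ i, singularValues A i ^ 2 ≤ (⨆ i, singularValues A i) * (√(m * n) * M) := calc
    ∑ i, singularValues A i ^ 2 = ∑ i, ∑ j, A i j ^ 2 := sum_singularValues_sq A
    _ ≤ ∑ i, ∑ j, M * A i j := by
      gcongr with i _ j _
      rw [sq]
      exact mul_le_mul_of_nonneg_right (hAM i j) (hA i j)
    _ = M * ∑ i, ∑ j, A i j := by simp only [mul_sum]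
    _ ≤ M * ((⨆ i, singularValues A i) * √(m * n)) := by
      gcongr
      simpa using sum_entries_le_iSup_singularValues_mul A
    _ = (⨆ i, singularValues A i) * (√(m * n) * M) := by ring
  refine Real.sSup_le ?_ (by positivity)
  rintro _ ⟨s, rfl : #s = k, rfl⟩
  simpa only [mul_assoc] using
    sum_le_of_sum_sq_le_iSup_mul (singularValues_nonneg A) hN hσ_sq s

theorem kyFan_le_of_nonneg (m n k : ℕ) (hm : 2 ≤ m) (hmn : m ≤ n)
    (hk1 : 1 ≤ k) (hkm : k ≤ m) (A : Matrix (Fin m) (Fin n) ℝ)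
    (hA : ∀ i j, 0 ≤ A i j) :
    kyFan k A ≤ (1 / 2) * (1 + Real.sqrt k) * Real.sqrt (m * n) * ⨆ i, ⨆ j, A i j :=
  kyFan_le_of_nonneg_general m n k A hA
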